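/- (Theorem 3.5, orbit-equivalence part, pointwise version) Let G be a countably infinite group acting on a set X and let φ : X → Õ be an equivariant map (φ(g·x) = g(φ(x)) for all g ∈ G, x ∈ X). Define the successor map S : X → X by S(x) = bi_{φ(x)}(1)·x. Then S is a bijection of X; for every k ∈ ℤ and x ∈ X, S^k(x) = bi_{φ(x)}(k)·x; and consequently the S-orbit {S^k(x) : k ∈ ℤ} equals the G-orbit {g·x : g ∈ G} for every x ∈ X. -/

import Mathlib

open scoped Classical

/-- An *order of type ℤ* on `G`. -/
def IsZOrder {G : Type*} (r : G → G → Prop) : Prop :=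
  IsStrictTotalOrder G r ∧ (∀ a b : G, {g : G | r a g ∧ r g b}.Finite) ∧
    (∀ a : G, ∃ b, r b a) ∧ (∀ a : G, ∃ b, r a b)

/-- The relation on `G` encoded by an element of `{0,1}^{G×G}`. -/
def relOf {G : Type*} (x : G × G → Bool) : G → G → Prop := fun a b => x (a, b) = true

/-- The set `Õ` of orders of type ℤ on `G`, as a subset of `{0,1}^{G×G}`. -/
def ZOrders (G : Type*) : Set (G × G → Bool) := {x | IsZOrder (relOf x)}

/-- The `G`-action on `{0,1}^{G×G}` corresponding to `a (g(≺)) b ⟺ ag ≺ bg`. -/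
def actB {G : Type*} [Group G] (g : G) (x : G × G → Bool) : G × G → Bool :=
  fun p => x (p.1 * g, p.2 * g)

/-- `f : ℤ → G` is an anchored order isomorphism from `(ℤ,<)` to `(G,r)`. -/
def IsAnchoredIso {G : Type*} [One G] (r : G → G → Prop) (f : ℤ → G) : Prop :=
  Function.Bijective f ∧ f 0 = 1 ∧ ∀ i j : ℤ, i < j ↔ r (f i) (f j)

/-- The anchored bijection `bi_≺ : ℤ → G` associated with an order of type ℤ
(junk value if it does not exist). -/
noncomputable def biOf {G : Type*} [One G] (r : G → G → Prop) : ℤ → G :=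
  if h : ∃ f : ℤ → G, IsAnchoredIso r f then h.choose else fun _ => 1

/-!
Anchored order isomorphisms `ℤ → G` are unique, since an order automorphism of `ℤ` is a
translation. Equivariance of `φ` therefore gives the cocycle identity
`bi_{φ(g•x)}(k) = bi_{φ(x)}(k + m) * g⁻¹` for `g = bi_{φ(x)}(m)`, which says exactly that
`(x, k) ↦ bi_{φ(x)}(k) • x` is an action of `ℤ` on `X`. Its time-one map is `S`, and its orbits
are the `G`-orbits because each `bi_{φ(x)}` is onto `G`.
-/

lemma IsZOrder.exists_isAnchoredIso {G : Type*} [One G] {r : G → G → Prop} (h : IsZOrder r) :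
    ∃ f : ℤ → G, IsAnchoredIso r f := by
  obtain ⟨hsto, hfin, hmin, hmax⟩ := h
  let _ : LinearOrder G := linearOrderOfSTO r
  have hlt : ∀ a b : G, a < b ↔ r a b := fun _ _ => Iff.rfl
  let _ : LocallyFiniteOrder G := .ofFiniteIcc fun a b => by
    by_cases hab : a ≤ b
    · rw [← Set.Ioo_union_both hab]
      exact (hfin a b).union (Set.toFinite _)
    · simp [Set.Icc_eq_empty hab]
  have : NoMaxOrder G := ⟨hmax⟩
  have : NoMinOrder G := ⟨hmin⟩
  have : Nonempty G := ⟨1⟩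
  let _ : SuccOrder G := LinearLocallyFiniteOrder.succOrder G
  let _ : PredOrder G := LinearLocallyFiniteOrder.predOrder G
  let e : G ≃o ℤ := orderIsoIntOfLinearSuccPredArch
  refine ⟨fun i => e.symm (i + e 1), ?_, by simp, fun i j => ?_⟩
  · exact e.symm.bijective.comp (Equiv.addRight (e 1)).bijective
  · simp [← hlt]

lemma OrderIso.int_apply_add_one (e : ℤ ≃o ℤ) (i : ℤ) : e (i + 1) = e i + 1 := by
  simpa [Order.succ_eq_add_one] using e.toInitialSeg.map_succ i

lemma OrderIso.int_apply_eq_add (e : ℤ ≃o ℤ) (i : ℤ) : e i = i + e 0 := by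
  induction i using Int.induction_on with
  | zero => simp
  | succ n ih => rw [e.int_apply_add_one, ih]; ring
  | pred n ih =>
    have := e.int_apply_add_one (-n - 1)
    rw [sub_add_cancel, ih] at this
    linarith

lemma IsAnchoredIso.unique {G : Type*} [One G] {r : G → G → Prop} {f f' : ℤ → G}
    (hf : IsAnchoredIso r f) (hf' : IsAnchoredIso r f') : f = f' := by
  let e' := Equiv.ofBijective f' hf'.1
  have hf'e' : ∀ i, f' (e'.symm (f i)) = f i := fun i => e'.apply_symm_apply (f i)
  have hmono : StrictMono (e'.symm ∘ f) := fun i j hij => by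
    rw [hf'.2.2, Function.comp_apply, Function.comp_apply, hf'e', hf'e', ← hf.2.2]
    exact hij
  let e : ℤ ≃o ℤ := hmono.orderIsoOfSurjective _ (e'.symm.surjective.comp hf.1.2)
  have he : ∀ i, f' (e i) = f i := hf'e'
  have he0 : e 0 = 0 := hf'.1.1 (by rw [he, hf.2.1, hf'.2.1])
  funext i
  rw [← he, e.int_apply_eq_add, he0, add_zero]

lemma biOf_eq {G : Type*} [One G] {r : G → G → Prop} {f : ℤ → G} (hf : IsAnchoredIso r f) :
    biOf r = f := by
  have h : ∃ f : ℤ → G, IsAnchoredIso r f := ⟨f, hf⟩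
  rw [biOf, dif_pos h]
  exact h.choose_spec.unique hf

lemma IsZOrder.isAnchoredIso_biOf {G : Type*} [One G] {r : G → G → Prop} (h : IsZOrder r) :
    IsAnchoredIso r (biOf r) := by
  obtain ⟨f, hf⟩ := h.exists_isAnchoredIso
  rwa [biOf_eq hf]

lemma IsAnchoredIso.mulRight_shift {G : Type*} [Group G] {r : G → G → Prop} {f : ℤ → G}
    (hf : IsAnchoredIso r f) (m : ℤ) :
    IsAnchoredIso (fun a b => r (a * f m) (b * f m)) (fun k => f (k + m) * (f m)⁻¹) := by
  obtain ⟨hbij, h0, hord⟩ := hf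
  refine ⟨?_, by simp, fun i j => ?_⟩
  · exact (Equiv.mulRight _).bijective.comp (hbij.comp (Equiv.addRight m).bijective)
  · simp only [inv_mul_cancel_right, ← hord, add_lt_add_iff_right]

lemma biOf_actB {G : Type*} [Group G] {x : G × G → Bool} {f : ℤ → G}
    (hf : IsAnchoredIso (relOf x) f) (m k : ℤ) :
    biOf (relOf (actB (f m) x)) k = f (k + m) * (f m)⁻¹ :=
  congrFun (biOf_eq (hf.mulRight_shift m)) k

section Flow

variable {X : Type*} (s : X → ℤ → X) (h0 : ∀ x, s x 0 = x)
  (hadd : ∀ x m k, s (s x m) k = s x (k + m))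

def flowTimeOne : Equiv.Perm X where
  toFun x := s x 1
  invFun x := s x (-1)
  left_inv x := by simp only [hadd, neg_add_cancel, h0]
  right_inv x := by simp only [hadd, add_neg_cancel, h0]

lemma flowTimeOne_apply (x : X) : flowTimeOne s h0 hadd x = s x 1 := rfl

lemma flowTimeOne_zpow_apply (k : ℤ) (x : X) : (flowTimeOne s h0 hadd ^ k) x = s x k := by
  induction k using Int.induction_on generalizing x with
  | zero => simp [h0]
  | succ n ih => rw [zpow_add_one, Equiv.Perm.mul_apply, ih, flowTimeOne_apply, hadd]
  | pred n ih =>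
    rw [zpow_sub_one, Equiv.Perm.mul_apply, ih, Equiv.Perm.inv_def]
    exact hadd x (-1) (-n)

end Flow

theorem successor_map_orbit_equivalence_general {G X : Type*} [Group G] [MulAction G X]
    (φ : X → G × G → Bool) (hmem : ∀ x : X, φ x ∈ ZOrders G)
    (heq : ∀ (g : G) (x : X), φ (g • x) = actB g (φ x)) :
    ∃ T : Equiv.Perm X, (∀ x : X, T x = biOf (relOf (φ x)) 1 • x) ∧
      (∀ (k : ℤ) (x : X), (T ^ k) x = biOf (relOf (φ x)) k • x) ∧
      (∀ x : X, {y : X | ∃ k : ℤ, (T ^ k) x = y} = MulAction.orbit G x) := by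
  have hbi : ∀ x, IsAnchoredIso (relOf (φ x)) (biOf (relOf (φ x))) :=
    fun x => IsZOrder.isAnchoredIso_biOf (hmem x)
  let s : X → ℤ → X := fun x k => biOf (relOf (φ x)) k • x
  have h0 : ∀ x, s x 0 = x := fun x => by simp [s, (hbi x).2.1]
  have hadd : ∀ x m k, s (s x m) k = s x (k + m) := fun x m k => by
    simp only [s, heq, biOf_actB (hbi x), smul_smul, inv_mul_cancel_right]
  refine ⟨flowTimeOne s h0 hadd, flowTimeOne_apply s h0 hadd,
    flowTimeOne_zpow_apply s h0 hadd, fun x => ?_⟩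
  change Set.range (fun k => (flowTimeOne s h0 hadd ^ k) x) = Set.range (· • x)
  simp only [flowTimeOne_zpow_apply]
  exact (hbi x).1.2.range_comp (· • x)

/-- Theorem 3.5 (orbit-equivalence part, pointwise version): if `φ : X → Õ` is
`G`-equivariant then the successor map `S(x) = bi_{φ(x)}(1)·x` is a bijection of `X`,
`S^k(x) = bi_{φ(x)}(k)·x` for all `k ∈ ℤ`, and the `S`-orbit of every point coincides
with its `G`-orbit. -/
theorem successor_map_orbit_equivalence {G X : Type*} [Group G] [Countable G]
    [Infinite G] [MulAction G X]
    (φ : X → G × G → Bool) (hmem : ∀ x : X, φ x ∈ ZOrders G)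
    (heq : ∀ (g : G) (x : X), φ (g • x) = actB g (φ x)) :
    ∃ T : Equiv.Perm X, (∀ x : X, T x = biOf (relOf (φ x)) 1 • x) ∧
      (∀ (k : ℤ) (x : X), (T ^ k) x = biOf (relOf (φ x)) k • x) ∧
      (∀ x : X, {y : X | ∃ k : ℤ, (T ^ k) x = y} = MulAction.orbit G x) :=
  successor_map_orbit_equivalence_general φ hmem heq
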